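/- arXiv:0902.4089 — 4 statements merged into one kernel-verified Lean document; each statement's English description precedes it below -/
import Mathlib

section
/- Let C = A × B where A and B are cyclic of order n > 1. For every element x of C of order n, there exists an element y of C of order n such that C is the internal direct product of ⟨x⟩ and ⟨y⟩ (i.e., ⟨x⟩ ∩ ⟨y⟩ = 1 and ⟨x⟩⟨y⟩ = C). -/
/-!
An element `x = (a, b)` of `ℤ/n × ℤ/n` has order `n` exactly when `(a, b)` is a unimodular row,
`u a + v b = 1` for some `u, v`: with `e = gcd(a, b, n)`, the element `x` is killed by `n / e`.
Then `y = (-v, u)` completes `x` to a matrix of determinant `1`, so `x, y` is a basis.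
-/

/-- `C = A × B`, the direct product of two cyclic groups of order `n`. -/
abbrev CycSq (n : ℕ) := Multiplicative (ZMod n) × Multiplicative (ZMod n)

open Multiplicative

theorem ZMod.natCast_mul_eq_zero_of_dvd_val {n e m : ℕ} [NeZero n] (hn : e * m = n) {c : ZMod n}
    (hc : e ∣ c.val) : (m : ZMod n) * c = 0 := by
  obtain ⟨k, hk⟩ := hc
  rw [← ZMod.natCast_zmod_val c, hk, ← Nat.cast_mul, ZMod.natCast_eq_zero_iff]
  exact ⟨k, by rw [← hn]; ring⟩

theorem ZMod.isCoprime_of_coprime_gcd_val {n : ℕ} [NeZero n] {p q : ZMod n}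
    (h : Nat.Coprime (Nat.gcd p.val q.val) n) : IsCoprime p q := by
  obtain ⟨c, hc⟩ := (ZMod.isUnit_iff_coprime _ n).2 h
  have hbezout : ((Nat.gcd p.val q.val : ℕ) : ZMod n) =
      p * (Nat.gcdA p.val q.val : ZMod n) + q * (Nat.gcdB p.val q.val : ZMod n) := by
    have := congrArg (Int.cast : ℤ → ZMod n) (Nat.gcd_eq_gcd_ab p.val q.val)
    push_cast at this
    simpa only [ZMod.natCast_zmod_val] using this
  refine ⟨↑c⁻¹ * Nat.gcdA p.val q.val, ↑c⁻¹ * Nat.gcdB p.val q.val, ?_⟩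
  linear_combination (↑c⁻¹ : ZMod n) * hbezout.symm - (↑c⁻¹ : ZMod n) * hc
    + Units.inv_mul c

namespace CycSq

variable {n : ℕ}

theorem pow_eq_one_iff (w : CycSq n) (m : ℕ) :
    w ^ m = 1 ↔ (m : ZMod n) * toAdd w.1 = 0 ∧ (m : ZMod n) * toAdd w.2 = 0 := by
  simp [Prod.ext_iff, ← toAdd_eq_zero, nsmul_eq_mul]

theorem mem_zpowers_iff {w z : CycSq n} :
    z ∈ Subgroup.zpowers w ↔
      ∃ s : ZMod n, toAdd z.1 = s * toAdd w.1 ∧ toAdd z.2 = s * toAdd w.2 := by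
  simp only [Subgroup.mem_zpowers_iff, Prod.ext_iff]
  constructor
  · rintro ⟨k, h1, h2⟩
    exact ⟨k, by simp [← h1, zsmul_eq_mul], by simp [← h2, zsmul_eq_mul]⟩
  · rintro ⟨s, h1, h2⟩
    refine ⟨s.cast, ?_, ?_⟩ <;> apply toAdd.injective <;> simp [h1, h2, zsmul_eq_mul]

theorem orderOf_eq_of_isCoprime {w : CycSq n} (hw : IsCoprime (toAdd w.1) (toAdd w.2)) :
    orderOf w = n := by
  obtain ⟨u, v, huv⟩ := hw
  refine Nat.dvd_antisymm (orderOf_dvd_of_pow_eq_one ?_) ((ZMod.natCast_eq_zero_iff _ _).1 ?_)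
  · simp [pow_eq_one_iff]
  · obtain ⟨h1, h2⟩ := (pow_eq_one_iff w _).1 (pow_orderOf_eq_one w)
    linear_combination -(orderOf w : ZMod n) * huv + u * h1 + v * h2

theorem isCoprime_of_orderOf_eq [NeZero n] {w : CycSq n} (hw : orderOf w = n) :
    IsCoprime (toAdd w.1) (toAdd w.2) := by
  refine ZMod.isCoprime_of_coprime_gcd_val (Nat.eq_one_of_dvd_one ?_)
  set e := Nat.gcd (Nat.gcd (toAdd w.1).val (toAdd w.2).val) n
  obtain ⟨m, hm⟩ : e ∣ n := Nat.gcd_dvd_right _ _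
  have he₁ : e ∣ (toAdd w.1).val := (Nat.gcd_dvd_left _ _).trans (Nat.gcd_dvd_left _ _)
  have he₂ : e ∣ (toAdd w.2).val := (Nat.gcd_dvd_left _ _).trans (Nat.gcd_dvd_right _ _)
  have hwm : w ^ m = 1 := (pow_eq_one_iff w m).2
    ⟨ZMod.natCast_mul_eq_zero_of_dvd_val hm.symm he₁,
      ZMod.natCast_mul_eq_zero_of_dvd_val hm.symm he₂⟩
  have hm0 : 0 < m := Nat.pos_of_ne_zero (by rintro rfl; exact NeZero.ne n (by simpa using hm))
  have : e * m ∣ 1 * m := by simpa [← hm, hw] using orderOf_dvd_of_pow_eq_one hwm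
  exact Nat.dvd_of_mul_dvd_mul_right hm0 this

theorem zpowers_inf_zpowers_eq_bot {w₁ w₂ : CycSq n}
    (hdet : IsUnit (toAdd w₁.1 * toAdd w₂.2 - toAdd w₁.2 * toAdd w₂.1)) :
    Subgroup.zpowers w₁ ⊓ Subgroup.zpowers w₂ = ⊥ := by
  rw [eq_bot_iff]
  rintro z ⟨hz₁, hz₂⟩
  obtain ⟨s, hs₁, hs₂⟩ := mem_zpowers_iff.1 hz₁
  obtain ⟨t, ht₁, ht₂⟩ := mem_zpowers_iff.1 hz₂
  have hs : s = 0 := hdet.mul_left_eq_zero.1 <| by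
    linear_combination
      -toAdd w₂.2 * hs₁ + toAdd w₂.1 * hs₂ + toAdd w₂.2 * ht₁ - toAdd w₂.1 * ht₂
  rw [Subgroup.mem_bot, Prod.ext_iff]
  simp [← toAdd_eq_zero, hs₁, hs₂, hs]

theorem zpowers_sup_zpowers_eq_top {w₁ w₂ : CycSq n}
    (hdet : IsUnit (toAdd w₁.1 * toAdd w₂.2 - toAdd w₁.2 * toAdd w₂.1)) :
    Subgroup.zpowers w₁ ⊔ Subgroup.zpowers w₂ = ⊤ := by
  obtain ⟨c, hc⟩ := hdet
  rw [eq_top_iff]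
  rintro z -
  set s := (toAdd z.1 * toAdd w₂.2 - toAdd z.2 * toAdd w₂.1) * ↑c⁻¹
  set t := (toAdd w₁.1 * toAdd z.2 - toAdd w₁.2 * toAdd z.1) * ↑c⁻¹
  refine Subgroup.mem_sup.2 ⟨(ofAdd (s * toAdd w₁.1), ofAdd (s * toAdd w₁.2)),
    mem_zpowers_iff.2 ⟨s, rfl, rfl⟩, (ofAdd (t * toAdd w₂.1), ofAdd (t * toAdd w₂.2)),
    mem_zpowers_iff.2 ⟨t, rfl, rfl⟩, ?_⟩
  have hc' := Units.mul_inv c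
  rw [hc] at hc'
  refine Prod.ext (toAdd.injective ?_) (toAdd.injective ?_)
  · simp only [Prod.fst_mul, toAdd_mul, toAdd_ofAdd, s, t]
    linear_combination toAdd z.1 * hc'
  · simp only [Prod.snd_mul, toAdd_mul, toAdd_ofAdd, s, t]
    linear_combination toAdd z.2 * hc'

end CycSq

theorem stmt_1 (n : ℕ) (hn : 1 < n) (x : CycSq n) (hx : orderOf x = n) :
    ∃ y : CycSq n, orderOf y = n ∧
      Subgroup.zpowers x ⊓ Subgroup.zpowers y = ⊥ ∧
      Subgroup.zpowers x ⊔ Subgroup.zpowers y = ⊤ := by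
  have : NeZero n := ⟨by omega⟩
  obtain ⟨u, v, huv⟩ := CycSq.isCoprime_of_orderOf_eq hx
  have hdet : toAdd x.1 * u - toAdd x.2 * -v = 1 := by linear_combination huv
  refine ⟨(ofAdd (-v), ofAdd u), CycSq.orderOf_eq_of_isCoprime ⟨-toAdd x.2, toAdd x.1, ?_⟩,
    CycSq.zpowers_inf_zpowers_eq_bot (hdet ▸ isUnit_one),
    CycSq.zpowers_sup_zpowers_eq_top (hdet ▸ isUnit_one)⟩
  simp only [toAdd_ofAdd]
  linear_combination huv
end

section
/- Let G = C_{n_1} × ... × C_{n_k} with 1 < n_1 | n_2 | ... | n_k, let p be a prime such that p^t exactly divides n_k/n_{k-1} with t ≥ 1 (with the convention n_0 = 1 if k = 1), and let A_p be the unique subgroup of order p^t of the last factor C_{n_k}. Then for a subgroup H of G, the exponent of G/H divides n_k/p^t if and only if H contains A_p. -/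
/-- The abelian group with invariant factors `n 0 ∣ n 1 ∣ ... ∣ n (k-1)`. -/
abbrev IG (k : ℕ) (n : Fin k → ℕ) := ∀ i : Fin k, Multiplicative (ZMod (n i))

/-- The canonical generator of the `i`-th cyclic factor. -/
abbrev gen (k : ℕ) (n : Fin k → ℕ) (i : Fin k) : IG k n :=
  Pi.mulSingle i (Multiplicative.ofAdd (1 : ZMod (n i)))

/-!
With e = n_k / p^t, the divisibility p^t ∣ n_k / n_{k-1} gives n_i ∣ n_{k-1} ∣ e for all i < k,
so raising to the e-th power kills every factor but the last. Hence every e-th power in G is a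
power of g^e, where g generates C_{n_k}, and G/H has exponent dividing e iff g^e ∈ H.
-/

theorem Nat.dvd_div_of_dvd_of_dvd_div {a b q : ℕ} (hab : a ∣ b) (hq : q ∣ b / a) : a ∣ b / q :=
  Nat.dvd_div_of_mul_dvd (mul_comm a q ▸ Nat.mul_dvd_of_dvd_div hab hq)

theorem Subgroup.pow_mem_zpowers_pow {G : Type*} [Group G] {g x : G}
    (hx : x ∈ Subgroup.zpowers g) (e : ℕ) : x ^ e ∈ Subgroup.zpowers (g ^ e) := by
  obtain ⟨z, rfl⟩ := hx
  exact ⟨z, by simp only [← zpow_natCast, ← zpow_mul, mul_comm]⟩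

theorem exponent_quotient_dvd_iff_of_forall_pow_mem_zpowers {G : Type*} [Group G]
    {H : Subgroup G} [H.Normal] {g : G} {e : ℕ} (hg : ∀ x : G, x ^ e ∈ Subgroup.zpowers (g ^ e)) :
    Monoid.exponent (G ⧸ H) ∣ e ↔ Subgroup.zpowers (g ^ e) ≤ H := by
  rw [Monoid.exponent_dvd_iff_forall_pow_eq_one, Subgroup.zpowers_le]
  refine ⟨fun h => (QuotientGroup.eq_one_iff _).mp (h g), fun h x => ?_⟩
  obtain ⟨x, rfl⟩ := QuotientGroup.mk_surjective x
  rw [← QuotientGroup.mk_pow, QuotientGroup.eq_one_iff]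
  exact Subgroup.zpowers_le.mpr h (hg x)

theorem ZMod.mem_zpowers_ofAdd_one {m : ℕ} (x : Multiplicative (ZMod m)) :
    x ∈ Subgroup.zpowers (Multiplicative.ofAdd (1 : ZMod m)) :=
  ⟨ZMod.cast x.toAdd, by simp [← ofAdd_zsmul]⟩

theorem pow_mem_zpowers_gen_pow {k : ℕ} {n : Fin k → ℕ} {j : Fin k} {e : ℕ}
    (he : ∀ i, i ≠ j → n i ∣ e) (x : IG k n) : x ^ e ∈ Subgroup.zpowers (gen k n j ^ e) := by
  have hx : x ^ e = Pi.mulSingle j (x j) ^ e := by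
    funext i
    rcases eq_or_ne i j with rfl | hi
    · simp
    · simp only [Pi.pow_apply, Pi.mulSingle_eq_of_ne hi, one_pow]
      apply Multiplicative.toAdd.injective
      rw [toAdd_pow, nsmul_eq_mul, (ZMod.natCast_eq_zero_iff _ _).mpr (he i hi), zero_mul, toAdd_one]
  rw [hx]
  refine Subgroup.pow_mem_zpowers_pow ?_ e
  have hmap := MonoidHom.map_zpowers (MonoidHom.mulSingle (fun i => Multiplicative (ZMod (n i))) j)
    (Multiplicative.ofAdd 1)
  exact hmap ▸ Subgroup.mem_map_of_mem _ (ZMod.mem_zpowers_ofAdd_one (x j))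

theorem stmt_5 (k : ℕ) (hk : 2 ≤ k) (n : Fin k → ℕ)
    (hdvd : ∀ i j : Fin k, i ≤ j → n i ∣ n j)
    (p t : ℕ)
    (hpt : p ^ t ∣ n ⟨k - 1, by omega⟩ / n ⟨k - 2, by omega⟩)
    (H : Subgroup (IG k n)) :
    Monoid.exponent (IG k n ⧸ H) ∣ n ⟨k - 1, by omega⟩ / p ^ t ↔
      Subgroup.zpowers
        (gen k n ⟨k - 1, by omega⟩ ^ (n ⟨k - 1, by omega⟩ / p ^ t)) ≤ H := by
  have hpen : n ⟨k - 2, by omega⟩ ∣ n ⟨k - 1, by omega⟩ / p ^ t :=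
    Nat.dvd_div_of_dvd_of_dvd_div (hdvd _ _ (Fin.mk_le_mk.mpr (by omega))) hpt
  refine exponent_quotient_dvd_iff_of_forall_pow_mem_zpowers
    (pow_mem_zpowers_gen_pow fun i hi => ?_)
  refine (hdvd i _ ?_).trans hpen
  have hi' := Fin.val_ne_of_ne hi
  simp only [Fin.le_def] at hi' ⊢
  omega
end

section
/- A finite nontrivial abelian group G is capable (i.e., there exists a group L with G ≅ L/Z(L)) if and only if there exists a family {H_i}_{i∈I} of subgroups of G with ∩_i H_i = 1, ∪_i H_i = G, and G/H_i ≅ G/H_j for all i, j ∈ I. -/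
/-!
Write `n` for the exponent of `G`. Both sides are equivalent to: `G ⧸ ⟨x⟩` has exponent `n` for
every `x : G` (Baer's condition that the two largest invariant factors agree). It suffices to
check this for one `g` of order `n`, i.e. to find `h` whose image in `G ⧸ ⟨g⟩` has order `n`:
for any `x`, the powers `g ^ m` and `h ^ m` (`m` the exponent of `G ⧸ ⟨x⟩`) lie in the cyclic
group `⟨x⟩` and have the same order, so `h ^ m ∈ ⟨g⟩`.

If `G ≅ L ⧸ Z(L)`, commutators in `L` are central and hence bilinear; if `x` lifts `g`, then every
`y ^ m` commutes with `x` (`m` the exponent of `G ⧸ ⟨g⟩`), so `x ^ m` is central and `g ^ m = 1`.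
Conversely, given such `g, h` and a character `ψ : G → ℤ/n` with `ψ g = 1`, the central extension
of `G` by `G` with bilinear cocycle `(a, c) ↦ c ^ ψ a` has centre exactly the fibre over `1`.

For the family, take the kernels of all surjective characters `G → ℤ/n`. Since `ℤ/n` is
self-injective, characters extend from subgroups; this makes these kernels cover `G` (a surjective
character of `G ⧸ ⟨x⟩` exists when its exponent is `n`) and intersect trivially. Conversely, the
quotients by such a family all have the same exponent, which `n` divides, and each `G ⧸ ⟨x⟩`
surjects onto one of them.
-/

open Subgroup Multiplicative
open scoped commutatorElement

theorem ZMod.exists_mul_eq_of_forall_mul_eq_zero {n : ℕ} [NeZero n] (a b : ZMod n)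
    (h : ∀ r : ZMod n, r * a = 0 → r * b = 0) : ∃ c, c * a = b := by
  -- With `d = gcd A n`, `(n / d) * a = 0` forces `d ∣ B`, and by Bezout `d` is a multiple of `a`.
  obtain ⟨A, rfl⟩ := ZMod.natCast_zmod_surjective a
  obtain ⟨B, rfl⟩ := ZMod.natCast_zmod_surjective b
  obtain ⟨A', hA⟩ := Nat.gcd_dvd_left A n
  obtain ⟨n', hn⟩ := Nat.gcd_dvd_right A n
  have hn' : n' ≠ 0 := by rintro rfl; exact NeZero.ne n (by simpa using hn)
  have hdB : A.gcd n ∣ B := by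
    have hB := h n' <| by
      rw [← Nat.cast_mul, ZMod.natCast_eq_zero_iff]
      exact ⟨A', by rw [hA]; nth_rw 2 [hn]; ring⟩
    rw [← Nat.cast_mul, ZMod.natCast_eq_zero_iff] at hB
    nth_rw 1 [hn, mul_comm n'] at hB
    exact Nat.dvd_of_mul_dvd_mul_right (Nat.pos_of_ne_zero hn') hB
  obtain ⟨B', rfl⟩ := hdB
  have hbez : ((A.gcd n : ℕ) : ZMod n) = A * Nat.gcdA A n := by
    have := congrArg (Int.cast : ℤ → ZMod n) (Nat.gcd_eq_gcd_ab A n)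
    push_cast at this
    simpa using this
  exact ⟨B' * Nat.gcdA A n, by push_cast; rw [hbez]; ring⟩

theorem ZMod.baer_self (n : ℕ) [NeZero n] : Module.Baer (ZMod n) (ZMod n) := by
  intro I g
  have := IsPrincipalIdealRing.of_surjective (Int.castRingHom (ZMod n)) ZMod.intCast_surjective
  obtain ⟨a, rfl⟩ := (IsPrincipalIdealRing.principal I).principal
  set ga : Ideal.span {a} := ⟨a, Ideal.mem_span_singleton_self a⟩
  obtain ⟨c, hc⟩ := ZMod.exists_mul_eq_of_forall_mul_eq_zero a (g ga) fun r hr => by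
    rw [← smul_eq_mul, ← map_smul, show r • ga = 0 from Subtype.ext hr, map_zero]
  refine ⟨LinearMap.mulRight (ZMod n) c, fun x hx => ?_⟩
  obtain ⟨r, rfl⟩ := Ideal.mem_span_singleton'.mp hx
  rw [show (⟨r * a, hx⟩ : Ideal.span {a}) = r • ga from rfl, map_smul, ← hc]
  simp [mul_assoc, mul_comm c]

section Characters

variable {G : Type*} [CommGroup G] {n : ℕ}

theorem exists_zmod_char_extension [NeZero n]
    (hG : ∀ g : G, g ^ n = 1) (H : Subgroup G) (φ : H →* Multiplicative (ZMod n)) :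
    ∃ ψ : G →* Multiplicative (ZMod n), ∀ h : H, ψ h = φ h := by
  let _ : Module (ZMod n) (Additive G) :=
    AddCommMonoid.zmodModule fun g => congrArg Additive.ofMul (hG g.toMul)
  let _ : Module (ZMod n) (Additive H) :=
    AddCommMonoid.zmodModule fun h => congrArg Additive.ofMul (Subtype.ext (hG h.toMul))
  obtain ⟨F, hF⟩ := (ZMod.baer_self n).extension_property
    (H.subtype.toAdditive.toZModLinearMap n) H.subtype_injective
    ((MonoidHom.toAdditiveLeft φ).toZModLinearMap n)
  exact ⟨MonoidHom.toAdditiveLeft.symm F.toAddMonoidHom,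
    fun h => congrArg ofAdd (LinearMap.congr_fun hF (Additive.ofMul h))⟩

theorem exists_zmod_char_apply_eq [NeZero n] (hG : ∀ g : G, g ^ n = 1) (x : G) :
    ∃ ψ : G →* Multiplicative (ZMod n), ψ x = ofAdd ((n / orderOf x : ℕ) : ZMod n) := by
  have hgen : ∀ y : zpowers x, y ∈ zpowers (⟨x, mem_zpowers x⟩ : zpowers x) := by
    rintro ⟨y, k, rfl⟩
    exact ⟨k, Subtype.ext (by simp)⟩
  have hdvd : orderOf (ofAdd ((n / orderOf x : ℕ) : ZMod n)) ∣
      orderOf (⟨x, mem_zpowers x⟩ : zpowers x) := by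
    rw [Subgroup.orderOf_mk]
    apply orderOf_dvd_of_pow_eq_one
    rw [← ofAdd_nsmul, nsmul_eq_mul, ← Nat.cast_mul,
      Nat.mul_div_cancel' (orderOf_dvd_of_pow_eq_one (hG x)), ZMod.natCast_self, ofAdd_zero]
  obtain ⟨ψ, hψ⟩ := exists_zmod_char_extension hG _ (monoidHomOfForallMemZpowers hgen hdvd)
  exact ⟨ψ, (hψ _).trans (monoidHomOfForallMemZpowers_apply_gen hgen hdvd)⟩

theorem exists_zmod_char_apply_eq_ofAdd_one [NeZero n] (hG : ∀ g : G, g ^ n = 1) {g : G}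
    (hg : orderOf g = n) : ∃ ψ : G →* Multiplicative (ZMod n), ψ g = ofAdd 1 := by
  simpa [hg, Nat.div_self (Nat.pos_of_neZero n)] using exists_zmod_char_apply_eq hG g

theorem exists_zmod_char_apply_ne_one [NeZero n] (hG : ∀ g : G, g ^ n = 1) {x : G}
    (hx : x ≠ 1) : ∃ ψ : G →* Multiplicative (ZMod n), ψ x ≠ 1 := by
  obtain ⟨ψ, hψ⟩ := exists_zmod_char_apply_eq hG x
  refine ⟨ψ, ?_⟩
  have hxn : orderOf x ∣ n := orderOf_dvd_of_pow_eq_one (hG x)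
  have hx1 : 1 < orderOf x := by
    have h0 : 0 < orderOf x := Nat.pos_of_dvd_of_pos hxn (Nat.pos_of_neZero n)
    have h1 : orderOf x ≠ 1 := by rwa [Ne, orderOf_eq_one_iff]
    omega
  rw [hψ, Ne, ofAdd_eq_one, ZMod.natCast_eq_zero_iff]
  exact Nat.not_dvd_of_pos_of_lt
    (Nat.div_pos (Nat.le_of_dvd (Nat.pos_of_neZero n) hxn) (by omega))
    (Nat.div_lt_self (Nat.pos_of_neZero n) hx1)

theorem MonoidHom.surjective_of_apply_eq_ofAdd_one [NeZero n]
    {ψ : G →* Multiplicative (ZMod n)} {g : G} (hg : ψ g = ofAdd 1) : Function.Surjective ψ :=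
  fun m => ⟨g ^ (toAdd m).val, by
    rw [map_pow, hg, ← ofAdd_nsmul, nsmul_one, ZMod.natCast_zmod_val]; rfl⟩

theorem exists_surjective_zmod_char_apply_ne_one [NeZero n] (hG : ∀ g : G, g ^ n = 1) {g : G}
    (hg : orderOf g = n) {x : G} (hx : x ≠ 1) :
    ∃ ψ : G →* Multiplicative (ZMod n), Function.Surjective ψ ∧ ψ x ≠ 1 := by
  obtain ⟨ψ, hψ⟩ := exists_zmod_char_apply_eq_ofAdd_one hG hg
  by_cases hψx : ψ x = 1
  · obtain ⟨χ, hχ⟩ := exists_zmod_char_apply_ne_one hG hx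
    -- `χ * ψ ^ (1 - χ g)` still sends `g` to `1`, and agrees with `χ` at `x`.
    refine ⟨χ * ψ ^ (1 - toAdd (χ g)).val,
      MonoidHom.surjective_of_apply_eq_ofAdd_one (g := g) ?_, by simpa [hψx]⟩
    rw [MonoidHom.mul_apply, MonoidHom.pow_apply, hψ, ← ofAdd_nsmul, nsmul_one,
      ZMod.natCast_zmod_val, ← ofAdd_toAdd (χ g), ← ofAdd_add, toAdd_ofAdd, add_sub_cancel]
  · exact ⟨ψ, MonoidHom.surjective_of_apply_eq_ofAdd_one hψ, hψx⟩

end Characters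

theorem pow_gcd_orderOf_mem_zpowers {G : Type*} [Group G] (x : G) (s : ℕ) :
    x ^ (orderOf x).gcd s ∈ zpowers (x ^ s) := by
  refine ⟨Nat.gcdB (orderOf x) s, ?_⟩
  dsimp only
  rw [← zpow_natCast x ((orderOf x).gcd s), Nat.gcd_eq_gcd_ab, zpow_add, zpow_mul,
    zpow_natCast x (orderOf x), pow_orderOf_eq_one, one_zpow, one_mul, zpow_mul, zpow_natCast]

theorem mem_zpowers_of_orderOf_dvd {G : Type*} [Group G] [Finite G] {x a b : G}
    (ha : a ∈ zpowers x) (hb : b ∈ zpowers x) (hab : orderOf b ∣ orderOf a) : b ∈ zpowers a := by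
  obtain ⟨s, rfl⟩ := mem_powers_iff_mem_zpowers.mpr ha
  obtain ⟨t, rfl⟩ := mem_powers_iff_mem_zpowers.mpr hb
  dsimp only at hab ⊢
  obtain ⟨N', hN⟩ := Nat.gcd_dvd_left (orderOf x) s
  have hN' : 0 < N' := Nat.pos_of_ne_zero (by rintro rfl; simp [(orderOf_pos x).ne'] at hN)
  have hs : orderOf (x ^ s) = N' := by
    rw [orderOf_pow]
    exact Nat.div_eq_of_eq_mul_right (Nat.gcd_pos_of_pos_left _ (orderOf_pos x)) hN
  obtain ⟨k, rfl⟩ : (orderOf x).gcd s ∣ t := by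
    rw [hs, orderOf_dvd_iff_pow_eq_one, ← pow_mul, ← orderOf_dvd_iff_pow_eq_one, hN] at hab
    exact Nat.dvd_of_mul_dvd_mul_right hN' hab
  rw [pow_mul]
  exact pow_mem (zpowers_le_of_mem (pow_gcd_orderOf_mem_zpowers x s) (mem_zpowers _)) k

section Commutator

variable {L : Type*} [Group L]

theorem commutatorElement_pow_right_of_commute {a b : L} (h : Commute ⁅a, b⁆ b) (k : ℕ) :
    ⁅a, b ^ k⁆ = ⁅a, b⁆ ^ k := by
  induction k with
  | zero => simp
  | succ k ih =>
    rw [pow_succ, commutatorElement_mul_right_eq_mul_conj, ih, mul_assoc (_ ^ k),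
      ← (h.pow_right k).eq, ← mul_assoc, ← pow_succ, mul_inv_cancel_right]

theorem commutatorElement_pow_left_of_commute {a b : L} (h : Commute ⁅a, b⁆ a) (k : ℕ) :
    ⁅a ^ k, b⁆ = ⁅a, b⁆ ^ k := by
  induction k with
  | zero => simp
  | succ k ih =>
    rw [pow_succ', commutatorElement_mul_left_eq_conj_mul, ih, ← (h.pow_left k).eq,
      mul_inv_cancel_right, ← pow_succ]

theorem pow_mem_center_of_forall_commute_pow (hL : ∀ a b : L, ⁅a, b⁆ ∈ center L) {x : L}
    {m : ℕ} (hm : ∀ y : L, Commute (y ^ m) x) : x ^ m ∈ center L := by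
  have central : ∀ a b c : L, Commute ⁅a, b⁆ c := fun a b c =>
    ((mem_center_iff.mp (hL a b)) c).symm
  refine mem_center_iff.mpr fun y => commutatorElement_eq_one_iff_mul_comm.mp ?_
  rw [commutatorElement_pow_right_of_commute (central _ _ _),
    ← commutatorElement_pow_left_of_commute (central _ _ _), commutatorElement_eq_one_iff_commute]
  exact hm y

end Commutator

@[ext]
structure BilinearExtension {G A : Type*} [CommGroup G] [CommGroup A] (β : G →* G →* A) where
  fst : G
  snd : A

namespace BilinearExtension

variable {G A : Type*} [CommGroup G] [CommGroup A] {β : G →* G →* A}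

instance : Mul (BilinearExtension β) :=
  ⟨fun p q => ⟨p.fst * q.fst, p.snd * q.snd * β p.fst q.fst⟩⟩
instance : One (BilinearExtension β) := ⟨⟨1, 1⟩⟩
instance : Inv (BilinearExtension β) := ⟨fun p => ⟨p.fst⁻¹, (p.snd * β p.fst⁻¹ p.fst)⁻¹⟩⟩

@[simp] theorem mul_fst (p q : BilinearExtension β) : (p * q).fst = p.fst * q.fst := rfl
@[simp] theorem mul_snd (p q : BilinearExtension β) :
    (p * q).snd = p.snd * q.snd * β p.fst q.fst := rfl
@[simp] theorem one_fst : (1 : BilinearExtension β).fst = 1 := rfl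
@[simp] theorem one_snd : (1 : BilinearExtension β).snd = 1 := rfl
@[simp] theorem inv_fst (p : BilinearExtension β) : p⁻¹.fst = p.fst⁻¹ := rfl
@[simp] theorem inv_snd (p : BilinearExtension β) : p⁻¹.snd = (p.snd * β p.fst⁻¹ p.fst)⁻¹ := rfl

instance : Group (BilinearExtension β) where
  mul_assoc p q r := by ext <;> simp [mul_assoc, mul_left_comm, mul_comm]
  one_mul p := by ext <;> simp
  mul_one p := by ext <;> simp
  inv_mul_cancel p := by ext <;> simp [mul_comm]

theorem mem_center_iff {p : BilinearExtension β} :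
    p ∈ center (BilinearExtension β) ↔ ∀ a, β p.fst a = β a p.fst := by
  rw [Subgroup.mem_center_iff]
  refine ⟨fun h a => ?_, fun h q => ?_⟩
  · simpa using (congrArg snd (h ⟨a, 1⟩)).symm
  · ext
    · exact mul_comm _ _
    · simp [h q.fst, mul_comm]

variable (β)

def fstHom : BilinearExtension β →* G where
  toFun := fst
  map_one' := rfl
  map_mul' _ _ := rfl

theorem nonempty_mulEquiv_quotient_center (hβ : ∀ a, (∀ c, β a c = β c a) → a = 1) :
    Nonempty (G ≃* BilinearExtension β ⧸ center (BilinearExtension β)) := by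
  have hsurj : Function.Surjective (fstHom β) := fun a => ⟨⟨a, 1⟩, rfl⟩
  have hker : (fstHom β).ker = center (BilinearExtension β) := by
    ext p
    rw [mem_center_iff, MonoidHom.mem_ker]
    exact ⟨fun (h : p.fst = 1) a => by simp [h], hβ p.fst⟩
  exact ⟨(QuotientGroup.quotientKerEquivOfSurjective _ hsurj).symm.trans
    (QuotientGroup.quotientMulEquivOfEq hker)⟩

end BilinearExtension

section ExponentCriterion

universe u

variable {G : Type u} [CommGroup G]

def powZModBilin {n : ℕ} [NeZero n] (hG : ∀ g : G, g ^ n = 1)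
    (ψ : G →* Multiplicative (ZMod n)) : G →* G →* G where
  toFun a := powMonoidHom (toAdd (ψ a)).val
  map_one' := by ext; simp
  map_mul' a b := by
    ext c
    simp only [map_mul, toAdd_mul, ZMod.val_add, powMonoidHom_apply, MonoidHom.mul_apply]
    rw [← pow_eq_pow_mod _ (hG c), pow_add]

@[simp]
theorem powZModBilin_apply {n : ℕ} [NeZero n] (hG : ∀ g : G, g ^ n = 1)
    (ψ : G →* Multiplicative (ZMod n)) (a c : G) :
    powZModBilin hG ψ a c = c ^ (toAdd (ψ a)).val :=
  rfl

theorem orderOf_dvd_exponent_quotient_zpowers {L : Type*} [Group L] (e : G ≃* L ⧸ center L)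
    (g : G) : orderOf g ∣ Monoid.exponent (G ⧸ zpowers g) := by
  set m := Monoid.exponent (G ⧸ zpowers g)
  have hL : ∀ a b : L, ⁅a, b⁆ ∈ center L := fun a b => by
    rw [← QuotientGroup.eq_one_iff, ← QuotientGroup.mk'_apply, map_commutatorElement,
      commutatorElement_eq_one_iff_mul_comm]
    exact e.symm.injective (by simp only [map_mul, mul_comm])
  obtain ⟨x, hx⟩ := QuotientGroup.mk_surjective (e g)
  have hxm : x ^ m ∈ center L := pow_mem_center_of_forall_commute_pow hL fun y => by
    obtain ⟨k, hk⟩ : (e.symm y) ^ m ∈ zpowers g := by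
      rw [← QuotientGroup.eq_one_iff, QuotientGroup.mk_pow]
      exact Monoid.pow_exponent_eq_one _
    have hz : (x ^ k)⁻¹ * y ^ m ∈ center L := by
      rw [← QuotientGroup.eq]
      simp only [QuotientGroup.mk_zpow, QuotientGroup.mk_pow, hx, ← map_zpow, hk]
      simp
    rw [← mul_inv_cancel_left (x ^ k) (y ^ m)]
    exact ((Commute.refl x).zpow_left k).mul_left (mem_center_iff.mp hz x).symm
  apply orderOf_dvd_of_pow_eq_one
  apply e.injective
  rw [map_pow, ← hx, ← QuotientGroup.mk_pow, map_one, QuotientGroup.eq_one_iff]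
  exact hxm

theorem exponent_quotient_zpowers_eq_of_covering {I : Type*} (H : I → Subgroup G)
    (hinf : ⨅ i, H i = ⊥) (hcov : ⋃ i, (H i : Set G) = Set.univ)
    (hiso : ∀ i j, Nonempty ((G ⧸ H i) ≃* (G ⧸ H j))) (x : G) :
    Monoid.exponent (G ⧸ zpowers x) = Monoid.exponent G := by
  obtain ⟨i, hxi⟩ := Set.mem_iUnion.mp (hcov.symm ▸ Set.mem_univ x : x ∈ ⋃ i, (H i : Set G))
  have hexp : ∀ j, Monoid.exponent (G ⧸ H j) = Monoid.exponent (G ⧸ H i) := fun j =>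
    Monoid.exponent_eq_of_mulEquiv (hiso j i).some
  have hG : Monoid.exponent G ∣ Monoid.exponent (G ⧸ H i) := by
    refine Monoid.exponent_dvd_of_forall_pow_eq_one fun y => ?_
    rw [← Subgroup.mem_bot, ← hinf, Subgroup.mem_iInf]
    intro j
    rw [← QuotientGroup.eq_one_iff, QuotientGroup.mk_pow, ← hexp j]
    exact Monoid.pow_exponent_eq_one _
  have hxH : zpowers x ≤ (QuotientGroup.mk' (H i)).ker := by
    rwa [QuotientGroup.ker_mk', zpowers_le]
  exact Nat.dvd_antisymm (MonoidHom.exponent_dvd (QuotientGroup.mk'_surjective _)) <| hG.trans <|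
    MonoidHom.exponent_dvd <| QuotientGroup.lift_surjective_of_surjective _ _
      (QuotientGroup.mk'_surjective _) hxH

variable [Finite G]

theorem exponent_quotient_zpowers_eq_of_orderOf_eq {g h : G} (hg : orderOf g = Monoid.exponent G)
    (hh : orderOf (h : G ⧸ zpowers g) = Monoid.exponent G) (x : G) :
    Monoid.exponent (G ⧸ zpowers x) = Monoid.exponent G := by
  set m := Monoid.exponent (G ⧸ zpowers x)
  have hmem : ∀ y : G, y ^ m ∈ zpowers x := fun y => by
    rw [← QuotientGroup.eq_one_iff, QuotientGroup.mk_pow]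
    exact Monoid.pow_exponent_eq_one _
  have hh' : orderOf h = Monoid.exponent G :=
    Nat.dvd_antisymm (Monoid.order_dvd_exponent h) (hh ▸ orderOf_map_dvd (QuotientGroup.mk' _) h)
  have hgh : h ^ m ∈ zpowers g := zpowers_le_of_mem (npow_mem_zpowers g m)
    (mem_zpowers_of_orderOf_dvd (hmem g) (hmem h) (by rw [orderOf_pow, orderOf_pow, hg, hh']))
  refine Nat.dvd_antisymm (MonoidHom.exponent_dvd (QuotientGroup.mk'_surjective _)) ?_
  rw [← hh]
  exact orderOf_dvd_of_pow_eq_one ((QuotientGroup.eq_one_iff _).mpr hgh)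

theorem exists_orderOf_quotient_zpowers_eq {g : G}
    (hg : Monoid.exponent (G ⧸ zpowers g) = Monoid.exponent G) :
    ∃ h : G, orderOf (h : G ⧸ zpowers g) = Monoid.exponent G := by
  obtain ⟨q, hq⟩ := Monoid.exists_orderOf_eq_exponent
    (Monoid.ExponentExists.of_finite (G := G ⧸ zpowers g))
  obtain ⟨h, rfl⟩ := QuotientGroup.mk_surjective q
  exact ⟨h, hq.trans hg⟩

theorem capable_of_orderOf_eq {g h : G} (hg : orderOf g = Monoid.exponent G)
    (hh : orderOf (h : G ⧸ zpowers g) = Monoid.exponent G) :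
    ∃ (L : Type u) (_ : Group L), Nonempty (G ≃* L ⧸ center L) := by
  set n := Monoid.exponent G
  have : NeZero n := ⟨Monoid.exponent_ne_zero_of_finite⟩
  have hG : ∀ y : G, y ^ n = 1 := Monoid.pow_exponent_eq_one
  obtain ⟨ψ, hψ⟩ := exists_zmod_char_apply_eq_ofAdd_one hG hg
  refine ⟨_, _, BilinearExtension.nonempty_mulEquiv_quotient_center (powZModBilin hG ψ) ?_⟩
  intro a ha
  -- Commuting with `g` gives `a = g ^ k`; commuting with `h` then gives `n ∣ k`.
  set k := (toAdd (ψ a)).val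
  have hga : g ^ k = a := by
    rw [← powZModBilin_apply hG, ha, powZModBilin_apply, hψ, toAdd_ofAdd, ZMod.val_one_eq_one_mod,
      ← pow_eq_pow_mod _ (hG a), pow_one]
  have hk : n ∣ k := by
    rw [← hh]
    apply orderOf_dvd_of_pow_eq_one
    rw [← QuotientGroup.mk_pow, QuotientGroup.eq_one_iff, ← powZModBilin_apply hG, ha,
      powZModBilin_apply, ← hga, ← pow_mul]
    exact npow_mem_zpowers g _
  rw [← hga, Nat.eq_zero_of_dvd_of_lt hk (ZMod.val_lt _), pow_zero]

theorem capable_iff_forall_exponent_quotient_zpowers_eq :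
    (∃ (L : Type u) (_ : Group L), Nonempty (G ≃* L ⧸ center L)) ↔
      ∀ x : G, Monoid.exponent (G ⧸ zpowers x) = Monoid.exponent G := by
  obtain ⟨g, hg⟩ := Monoid.exists_orderOf_eq_exponent (Monoid.ExponentExists.of_finite (G := G))
  constructor
  · rintro ⟨L, _, ⟨e⟩⟩
    obtain ⟨h, hh⟩ := exists_orderOf_quotient_zpowers_eq <|
      Nat.dvd_antisymm (MonoidHom.exponent_dvd (QuotientGroup.mk'_surjective _))
        (hg ▸ orderOf_dvd_exponent_quotient_zpowers e g)
    exact exponent_quotient_zpowers_eq_of_orderOf_eq hg hh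
  · intro hP
    obtain ⟨h, hh⟩ := exists_orderOf_quotient_zpowers_eq (hP g)
    exact capable_of_orderOf_eq hg hh

theorem exists_covering_of_forall_exponent_quotient_zpowers_eq
    (hP : ∀ x : G, Monoid.exponent (G ⧸ zpowers x) = Monoid.exponent G) :
    ∃ (I : Type u) (H : I → Subgroup G), ⨅ i, H i = ⊥ ∧ ⋃ i, (H i : Set G) = Set.univ ∧
      ∀ i j, Nonempty ((G ⧸ H i) ≃* (G ⧸ H j)) := by
  set n := Monoid.exponent G
  have : NeZero n := ⟨Monoid.exponent_ne_zero_of_finite⟩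
  obtain ⟨g, hg⟩ := Monoid.exists_orderOf_eq_exponent (Monoid.ExponentExists.of_finite (G := G))
  refine ⟨{ψ : G →* Multiplicative (ZMod n) // Function.Surjective ψ}, fun ψ => ψ.1.ker, ?_, ?_,
    fun ψ χ => ⟨(QuotientGroup.quotientKerEquivOfSurjective _ ψ.2).trans
      (QuotientGroup.quotientKerEquivOfSurjective _ χ.2).symm⟩⟩
  · refine (Subgroup.eq_bot_iff_forall _).mpr fun x hx => ?_
    by_contra hx1
    obtain ⟨ψ, hψ, hψx⟩ :=
      exists_surjective_zmod_char_apply_ne_one Monoid.pow_exponent_eq_one hg hx1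
    exact hψx (Subgroup.mem_iInf.mp hx ⟨ψ, hψ⟩)
  · refine Set.eq_univ_of_forall fun x => Set.mem_iUnion.mpr ?_
    obtain ⟨q, hq⟩ := Monoid.exists_orderOf_eq_exponent
      (Monoid.ExponentExists.of_finite (G := G ⧸ zpowers x))
    obtain ⟨ψ, hψ⟩ := exists_zmod_char_apply_eq_ofAdd_one
      (fun y => (hP x) ▸ Monoid.pow_exponent_eq_one y) (hq.trans (hP x))
    refine ⟨⟨ψ.comp (QuotientGroup.mk' _), (MonoidHom.surjective_of_apply_eq_ofAdd_one hψ).comp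
      (QuotientGroup.mk'_surjective _)⟩, ?_⟩
    simp [(QuotientGroup.eq_one_iff x).mpr (mem_zpowers x)]

theorem exists_covering_iff_forall_exponent_quotient_zpowers_eq :
    (∃ (I : Type u) (H : I → Subgroup G), ⨅ i, H i = ⊥ ∧ ⋃ i, (H i : Set G) = Set.univ ∧
      ∀ i j, Nonempty ((G ⧸ H i) ≃* (G ⧸ H j))) ↔
      ∀ x : G, Monoid.exponent (G ⧸ zpowers x) = Monoid.exponent G :=
  ⟨fun ⟨_, H, hinf, hcov, hiso⟩ => exponent_quotient_zpowers_eq_of_covering H hinf hcov hiso,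
    exists_covering_of_forall_exponent_quotient_zpowers_eq⟩

end ExponentCriterion

theorem stmt_8_general {G : Type} [CommGroup G] [Finite G] :
    (∃ (L : Type) (_ : Group L), Nonempty (G ≃* L ⧸ Subgroup.center L)) ↔
    ∃ (I : Type) (H : I → Subgroup G),
      (⨅ i, H i) = ⊥ ∧
      (⋃ i, (H i : Set G)) = Set.univ ∧
      ∀ i j : I, Nonempty ((G ⧸ H i) ≃* (G ⧸ H j)) :=
  capable_iff_forall_exponent_quotient_zpowers_eq.trans
    exists_covering_iff_forall_exponent_quotient_zpowers_eq.symm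

theorem stmt_8 {G : Type} [CommGroup G] [Finite G] [Nontrivial G] :
    (∃ (L : Type) (_ : Group L), Nonempty (G ≃* L ⧸ Subgroup.center L)) ↔
    ∃ (I : Type) (H : I → Subgroup G),
      (⨅ i, H i) = ⊥ ∧
      (⋃ i, (H i : Set G)) = Set.univ ∧
      ∀ i j : I, Nonempty ((G ⧸ H i) ≃* (G ⧸ H j)) :=
  stmt_8_general
end

section
/- Let G = C_{n_1} × ... × C_{n_k} with 1 < n_1 | n_2 | ... | n_k and k ≥ 2, with generators a_1, ..., a_k of the factors. For 1 ≤ i ≤ k−1, the subgroup H_i = ⟨a_1, ..., a_{i−1}, a_i a_k^{n_k/n_i}, a_{i+1}, ..., a_{k−1}⟩ is isomorphic to C_{n_1} × ... × C_{n_{k−1}}. -/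
open Function

theorem ZMod.exists_addMonoidHom_apply_one {m : ℕ} {A : Type*} [AddCommGroup A] {a : A}
    (ha : m • a = 0) : ∃ f : ZMod m →+ A, f 1 = a :=
  ⟨ZMod.lift m ⟨zmultiplesHom A a, by simpa using ha⟩, by
    simpa using ZMod.lift_coe m ⟨zmultiplesHom A a, by simpa using ha⟩ 1⟩

theorem Pi.closure_range_mulSingle_ofAdd_one {ι : Type*} [Finite ι] [DecidableEq ι]
    (m : ι → ℕ) :
    Subgroup.closure (Set.range fun j =>
      Pi.mulSingle (M := fun j => Multiplicative (ZMod (m j))) j (.ofAdd 1)) = ⊤ := by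
  refine eq_top_iff.2 fun x _ => Subgroup.pi_mem_of_mulSingle_mem x fun j => ?_
  obtain ⟨z, hz⟩ := ZMod.intCast_surjective (Multiplicative.toAdd (x j))
  have hxj : Pi.mulSingle j (x j) =
      Pi.mulSingle (M := fun j => Multiplicative (ZMod (m j))) j (.ofAdd 1) ^ z := by
    rw [← Pi.mulSingle_zpow, ← ofAdd_zsmul, zsmul_one, hz, ofAdd_toAdd]
  rw [hxj]
  exact zpow_mem (Subgroup.subset_closure (Set.mem_range_self j)) z

theorem MonoidHom.range_eq_closure_range_mulSingle_ofAdd_one {ι G : Type*} [Finite ι]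
    [DecidableEq ι] [Group G] {m : ι → ℕ} (f : (∀ j, Multiplicative (ZMod (m j))) →* G) :
    f.range = Subgroup.closure (Set.range fun j => f (Pi.mulSingle j (.ofAdd 1))) := by
  rw [range_eq_map, ← Pi.closure_range_mulSingle_ofAdd_one, map_closure, ← Set.range_comp]
  rfl

namespace Pi

variable {ι κ : Type*} {M : ι → Type*}

section MulOneClass

variable [∀ t, MulOneClass (M t)]

def restrictMonoidHom (e : κ → ι) : (∀ t, M t) →* ∀ j, M (e j) :=
  MonoidHom.pi fun j => Pi.evalMonoidHom M (e j)

theorem restrictMonoidHom_mulSingle [DecidableEq ι] [DecidableEq κ] {e : κ → ι}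
    (he : Injective e) (j : κ) (c : M (e j)) :
    restrictMonoidHom e (Pi.mulSingle (e j) c) = Pi.mulSingle j c := by
  funext j'
  by_cases h : j' = j
  · subst h
    simp [restrictMonoidHom]
  · simp [restrictMonoidHom, h, Pi.mulSingle_eq_of_ne (he.ne h)]

end MulOneClass

variable [∀ t, CommMonoid (M t)] [DecidableEq ι] [Fintype κ]

def extendByOneMonoidHom (e : κ → ι) : (∀ j, M (e j)) →* ∀ t, M t :=
  ∏ j, (MonoidHom.mulSingle M (e j)).comp (Pi.evalMonoidHom (fun j => M (e j)) j)

theorem extendByOneMonoidHom_mulSingle [DecidableEq κ] (e : κ → ι) (j : κ) (c : M (e j)) :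
    extendByOneMonoidHom e (Pi.mulSingle j c) = Pi.mulSingle (e j) c := by
  simp only [extendByOneMonoidHom, MonoidHom.finsetProd_apply]
  rw [Finset.prod_eq_single j]
  · simp
  · intro j' _ h
    simp [h]
  · simp

theorem restrictMonoidHom_comp_extendByOneMonoidHom {e : κ → ι} (he : Injective e) :
    (restrictMonoidHom e).comp (extendByOneMonoidHom e) = MonoidHom.id (∀ j, M (e j)) := by
  classical
  refine MonoidHom.functions_ext _ _ _ fun j c => ?_
  simp [extendByOneMonoidHom_mulSingle, restrictMonoidHom_mulSingle he]

def shearMonoidHom (e : κ → ι) (L : ι) (i : κ) (ψ : M (e i) →* M L) :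
    (∀ j, M (e j)) →* ∀ t, M t :=
  extendByOneMonoidHom e * (MonoidHom.mulSingle M L).comp (ψ.comp (Pi.evalMonoidHom _ i))

variable {e : κ → ι} {L : ι} {i : κ} (ψ : M (e i) →* M L)

theorem shearMonoidHom_injective (he : Injective e) (hL : ∀ j, e j ≠ L) :
    Injective (shearMonoidHom e L i ψ) := by
  refine LeftInverse.injective (g := restrictMonoidHom e) fun x => ?_
  have hcorr : restrictMonoidHom e (Pi.mulSingle L (ψ (x i))) = 1 :=
    funext fun j => Pi.mulSingle_eq_of_ne (hL j) _
  rw [shearMonoidHom, MonoidHom.mul_apply, map_mul, ← MonoidHom.comp_apply,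
    restrictMonoidHom_comp_extendByOneMonoidHom he, MonoidHom.id_apply, MonoidHom.comp_apply,
    MonoidHom.comp_apply, MonoidHom.mulSingle_apply, Pi.evalMonoidHom_apply, hcorr, mul_one]

variable [DecidableEq κ]

theorem shearMonoidHom_mulSingle_self (c : M (e i)) :
    shearMonoidHom e L i ψ (Pi.mulSingle i c) = Pi.mulSingle (e i) c * Pi.mulSingle L (ψ c) := by
  simp [shearMonoidHom, extendByOneMonoidHom_mulSingle]

theorem shearMonoidHom_mulSingle_of_ne {j : κ} (hj : j ≠ i) (c : M (e j)) :
    shearMonoidHom e L i ψ (Pi.mulSingle j c) = Pi.mulSingle (e j) c := by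
  simp [shearMonoidHom, extendByOneMonoidHom_mulSingle, Pi.mulSingle_eq_of_ne' hj]

end Pi

theorem stmt_9 (k : ℕ) (n : Fin k → ℕ)
    (hdvd : ∀ i j : Fin k, i ≤ j → n i ∣ n j)
    (i : Fin k) (hi : (i : ℕ) < k - 1) :
    Nonempty ((Subgroup.closure
        ((fun j : Fin k => if j = i then
            gen k n i * gen k n ⟨k - 1, by omega⟩ ^ (n ⟨k - 1, by omega⟩ / n i)
          else gen k n j) '' {j : Fin k | (j : ℕ) < k - 1})) ≃*
      (∀ j : Fin (k - 1), Multiplicative (ZMod (n (Fin.castLE (by omega) j))))) := by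
  set L : Fin k := ⟨k - 1, by omega⟩
  set e : Fin (k - 1) → Fin k := Fin.castLE (by omega)
  set i' : Fin (k - 1) := ⟨i, hi⟩
  have hL : ∀ j, e j ≠ L := fun j h => by
    simp only [e, L, Fin.ext_iff, Fin.val_castLE] at h
    omega
  obtain ⟨ψ, hψ⟩ := ZMod.exists_addMonoidHom_apply_one (m := n i)
    (a := (n L / n i) • (1 : ZMod (n L))) (by
      rw [smul_smul, Nat.mul_div_cancel' (hdvd i L (Nat.le_of_lt hi)), nsmul_one, ZMod.natCast_self])
  set φ := Pi.shearMonoidHom (M := fun t => Multiplicative (ZMod (n t))) e L i' ψ.toMultiplicative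
  have hgen : ∀ j, φ (Pi.mulSingle j (.ofAdd 1)) =
      if e j = i then gen k n i * gen k n L ^ (n L / n i) else gen k n (e j) := by
    intro j
    by_cases h : j = i'
    · subst h
      rw [Pi.shearMonoidHom_mulSingle_self, if_pos (show e i' = i from rfl), ← Pi.mulSingle_pow,
        ← ofAdd_nsmul, AddMonoidHom.toMultiplicative_apply_apply, toAdd_ofAdd, hψ]
      rfl
    · have hei : e j ≠ i := fun h' => h (Fin.ext (congrArg Fin.val h' :))
      rw [Pi.shearMonoidHom_mulSingle_of_ne _ h, if_neg hei]
  have hrange := φ.range_eq_closure_range_mulSingle_ofAdd_one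
  simp only [hgen] at hrange
  rw [← Fin.range_castLE (show k - 1 ≤ k by omega), ← Set.range_comp]
  exact ⟨(MulEquiv.subgroupCongr hrange).symm.trans
    (MonoidHom.ofInjective (Pi.shearMonoidHom_injective _ (Fin.castLE_injective _) hL)).symm⟩
end
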